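/- Let V be a normal supervisor on the plant G, let the attack constraint be normal (Σ_{c,A} ⊆ Σ_{o,A}), and let A be a successful attacker. Then every string in L(V_A/G) \ L(V/G) has the form s'σ with s' ∈ L(V/G) and σ ∈ Σ_{c,A} such that (s', σ) is an attack pair. -/

import Mathlib

/-!
Let `sσ ∈ L(V_A/G) \ L(V/G)`. Since `V` is normal, unobservable events are uncontrollable and
hence always enabled, so `L(V/G)` is closed under `P_o`-equivalence inside `G`; as
`P_o(s) ∈ P_o(L(V/G))`, this gives `s ∈ L(V/G)`. Then `σ ∉ V(P_o s)`, so `σ` was enabled by the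
attacker and `σ ∈ Σ_{c,A} ⊆ Σ_o`. Hence `P_o(sσ) ∉ P_o(L(V/G))`, and success of the attacker puts
a prefix of `sσ` into `L_dmg`; it cannot be a prefix of `s ∈ L(V/G)`, so `sσ ∈ L_dmg`.

For the attack-pair condition take `s' ∈ L(V/G)` with `P̂(P_o s') = P̂(P_o s)` and `s'σ ∈ L(G)`.
Because `Σ_{c,A} ⊆ Σ_{o,A}`, the attacker observation records every attackable event, so the
attacked supervisor makes the same decisions along `s'` as along an attacked run observed as `s`;
thus `s' ∈ L(V_A/G)`, and then `s'σ ∈ L(V_A/G)`. The last letter of `P̂` records `V`, so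
`σ ∉ V(P_o s')`, and the argument above gives `s'σ ∈ L_dmg`.
-/

open scoped Classical

namespace ActuatorAttack

variable {A : Type*}

/-- Natural projection onto a sub-alphabet `S`: erase the letters not in `S`. -/
noncomputable def proj (S : Set A) (l : List A) : List A :=
  l.filter (fun a => decide (a ∈ S))

/-- The least language containing `ε` and closed under appending an event `σ`
allowed by `allow` at `s`, provided the result lies in the plant language `LG`. -/
inductive Lang (LG : Set (List A)) (allow : List A → Set A) : List A → Prop
  | nil : Lang LG allow []
  | snoc {s : List A} {σ : A} : Lang LG allow s → σ ∈ allow s →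
      (s ++ [σ]) ∈ LG → Lang LG allow (s ++ [σ])

/-- The closed-loop language `L(V/G)`. -/
def LVG (LG : Set (List A)) (So : Set A) (V : List A → Set A) :
    Set (List A) :=
  {s | Lang LG (fun t => V (proj So t)) s}

/-- Auxiliary function for the attacker-observation map: `pre` is the prefix
of the supervisor observation sequence already processed. -/
noncomputable def phatAux (V : List A → Set A) (SoA : Set A) :
    List A → List A → List (List A × Set A)
  | _, [] => []
  | pre, σ :: rest =>
      (proj SoA [σ], V (pre ++ [σ])) :: phatAux V SoA (pre ++ [σ]) rest

/-- The attacker-observation map `P̂`: the i-th letter of `P̂(σ₁⋯σₙ)` is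
`(P_{o,A}(σᵢ), V(σ₁⋯σᵢ))`. -/
noncomputable def phat (V : List A → Set A) (SoA : Set A) (w : List A) :
    List (List A × Set A) :=
  phatAux V SoA [] w

/-- The attacked supervisor `V_A`. -/
noncomputable def VA (V : List A → Set A) (ScA SoA : Set A)
    (Att : List (List A × Set A) → Set A) (w : List A) : Set A :=
  (V w \ ScA) ∪ Att (phat V SoA w)

/-- The attacked closed-loop language `L(V_A/G)`. -/
def LVAG (LG : Set (List A)) (So : Set A) (V : List A → Set A)
    (ScA SoA : Set A) (Att : List (List A × Set A) → Set A) : Set (List A) :=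
  {s | Lang LG (fun t =>
      {σ | proj So t ∈ proj So '' LVG LG So V ∧
           σ ∈ VA V ScA SoA Att (proj So t)}) s}

/-- An attacker is enabling if it enables every attackable event enabled by
the supervisor. -/
def Enabling (LG : Set (List A)) (So : Set A) (V : List A → Set A)
    (ScA SoA : Set A) (Att : List (List A × Set A) → Set A) : Prop :=
  ∀ w ∈ proj So '' LVG LG So V, V w ∩ ScA ⊆ Att (phat V SoA w)

/-- An attacker is successful if the attacked closed-loop language meets the
damage set, and everything outside `P_o⁻¹(P_o(L(V/G)))` lies in `L_dmg·Σ*`. -/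
def Successful (LG : Set (List A)) (So : Set A) (V : List A → Set A)
    (ScA SoA : Set A) (Att : List (List A × Set A) → Set A)
    (Ldmg : Set (List A)) : Prop :=
  (LVAG LG So V ScA SoA Att ∩ Ldmg).Nonempty ∧
  LVAG LG So V ScA SoA Att \ (proj So ⁻¹' (proj So '' LVG LG So V)) ⊆
    {t | ∃ d ∈ Ldmg, d <+: t}

/-- `(s, σ)` is an attack pair. -/
def AttackPair (LG : Set (List A)) (So : Set A) (V : List A → Set A)
    (ScA SoA : Set A) (Ldmg : Set (List A)) (s : List A) (σ : A) : Prop :=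
  s ∈ LVG LG So V ∧ σ ∈ ScA ∧ s ++ [σ] ∈ Ldmg ∧
  ∀ s' ∈ LVG LG So V,
    phat V SoA (proj So s) = phat V SoA (proj So s') →
    s' ++ [σ] ∈ LG → s' ++ [σ] ∈ Ldmg

/-- `En(s, σ)`: one-step `σ`-extensions in `L(G)` of strings of `L(V/G)` that
are attacker-observation equivalent to `s`. -/
def En (LG : Set (List A)) (So : Set A) (V : List A → Set A)
    (SoA : Set A) (s : List A) (σ : A) : Set (List A) :=
  {t | ∃ s' ∈ LVG LG So V, t = s' ++ [σ] ∧ t ∈ LG ∧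
       phat V SoA (proj So s) = phat V SoA (proj So s')}

/-- `I(ŵ)`: attackable events `σ` such that some string `s'` of `L(V/G)` with
attacker observation `ŵ` forms an attack pair `(s', σ)`. -/
def ISet (LG : Set (List A)) (So : Set A) (V : List A → Set A)
    (ScA SoA : Set A) (Ldmg : Set (List A))
    (w : List (List A × Set A)) : Set A :=
  {σ | σ ∈ ScA ∧ ∃ s' ∈ LVG LG So V,
        phat V SoA (proj So s') = w ∧ AttackPair LG So V ScA SoA Ldmg s' σ}

/-- The supremal attacker `A^sup`. -/
def Asup (LG : Set (List A)) (So : Set A) (V : List A → Set A)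
    (ScA SoA : Set A) (Ldmg : Set (List A))
    (w : List (List A × Set A)) : Set A :=
  {σ | ∃ s ∈ LVG LG So V, phat V SoA (proj So s) = w ∧
        σ ∈ V (proj So s) ∩ ScA} ∪
  ISet LG So V ScA SoA Ldmg w

section Projection

variable {S : Set A}

lemma proj_append (l m : List A) : proj S (l ++ m) = proj S l ++ proj S m := by
  simp [proj]

@[simp] lemma proj_singleton_of_mem {a : A} (h : a ∈ S) : proj S [a] = [a] := by
  simp [proj, h]

@[simp] lemma proj_singleton_of_not_mem {a : A} (h : a ∉ S) : proj S [a] = [] := by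
  simp [proj, h]

lemma eq_of_proj_singleton_eq {a b : A} (hb : b ∈ S) (h : proj S [a] = proj S [b]) : a = b := by
  by_cases ha : a ∈ S <;> simp_all

end Projection

section AttackerObservation

variable (V : List A → Set A) (SoA : Set A)

lemma length_phatAux (pre w : List A) : (phatAux V SoA pre w).length = w.length := by
  induction w generalizing pre with
  | nil => rfl
  | cons a w ih => simp [phatAux, ih]

lemma length_phat (w : List A) : (phat V SoA w).length = w.length :=
  length_phatAux V SoA [] w

lemma phatAux_append (pre w₁ w₂ : List A) :
    phatAux V SoA pre (w₁ ++ w₂) = phatAux V SoA pre w₁ ++ phatAux V SoA (pre ++ w₁) w₂ := by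
  induction w₁ generalizing pre with
  | nil => simp [phatAux]
  | cons a w₁ ih => simp [phatAux, ih]

lemma phat_append_singleton (w : List A) (σ : A) :
    phat V SoA (w ++ [σ]) = phat V SoA w ++ [(proj SoA [σ], V (w ++ [σ]))] := by
  simp [phat, phatAux_append, phatAux]

lemma phat_append_singleton_inj {u₁ u₂ : List A} {a b : A} :
    phat V SoA (u₁ ++ [a]) = phat V SoA (u₂ ++ [b]) ↔
      phat V SoA u₁ = phat V SoA u₂ ∧ proj SoA [a] = proj SoA [b] ∧
        V (u₁ ++ [a]) = V (u₂ ++ [b]) := by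
  simp [phat_append_singleton, List.append_singleton_inj]

variable {V SoA}

lemma V_eq_of_phat_eq {w w' : List A} (h : phat V SoA w = phat V SoA w') : V w = V w' := by
  have hlen : w.length = w'.length := by rw [← length_phat V SoA, h, length_phat]
  rcases w.eq_nil_or_concat' with rfl | ⟨u, a, rfl⟩ <;>
    rcases w'.eq_nil_or_concat' with rfl | ⟨u', a', rfl⟩
  · rfl
  · simp at hlen
  · simp at hlen
  · exact ((phat_append_singleton_inj V SoA).mp h).2.2

end AttackerObservation

namespace Lang

variable {LG : Set (List A)} {allow : List A → Set A}

lemma of_append_singleton {s : List A} {σ : A} (h : Lang LG allow (s ++ [σ])) :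
    Lang LG allow s ∧ σ ∈ allow s ∧ s ++ [σ] ∈ LG := by
  generalize ht : s ++ [σ] = t at h
  cases h with
  | nil => simp at ht
  | snoc hs hσ hG =>
    obtain ⟨rfl, rfl⟩ := List.append_singleton_inj.mp ht
    exact ⟨hs, hσ, hG⟩

lemma of_prefix {u t : List A} (ht : Lang LG allow t) (hu : u <+: t) : Lang LG allow u := by
  induction ht generalizing u with
  | nil => rw [List.prefix_nil.mp hu]; exact nil
  | snoc hs hσ hG ih =>
    rcases List.prefix_concat_iff.mp hu with rfl | hu
    · exact snoc hs hσ hG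
    · exact ih hu

lemma exists_of_proj_eq_append_singleton {S : Set A} {f : List A → Set A} {s w : List A} {σ : A}
    (hs : Lang LG (fun t => f (proj S t)) s) (h : proj S s = w ++ [σ]) :
    ∃ u, Lang LG (fun t => f (proj S t)) u ∧ proj S u = w ∧ σ ∈ f w := by
  induction hs with
  | nil => simp [proj] at h
  | @snoc u τ hu hτ _ ih =>
    by_cases hτS : τ ∈ S
    · rw [proj_append, proj_singleton_of_mem hτS] at h
      obtain ⟨rfl, rfl⟩ := List.append_singleton_inj.mp h
      exact ⟨u, hu, rfl, hτ⟩
    · rw [proj_append, proj_singleton_of_not_mem hτS, List.append_nil] at h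
      exact ih h

end Lang

section ClosedLoop

variable {LG : Set (List A)} {So Sc : Set A} {V : List A → Set A} {ScA SoA : Set A}
  {Att : List (List A × Set A) → Set A}

lemma exists_mem_LVG_of_proj_eq_append_singleton {s w : List A} {σ : A}
    (hs : s ∈ LVG LG So V) (h : proj So s = w ++ [σ]) :
    ∃ u ∈ LVG LG So V, proj So u = w ∧ σ ∈ V w :=
  Lang.exists_of_proj_eq_append_singleton (f := V) hs h

lemma exists_mem_LVAG_of_proj_eq_append_singleton {s w : List A} {σ : A}
    (hs : s ∈ LVAG LG So V ScA SoA Att) (h : proj So s = w ++ [σ]) :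
    ∃ u ∈ LVAG LG So V ScA SoA Att, proj So u = w ∧ σ ∈ VA V ScA SoA Att w :=
  let ⟨u, hu, huw, hσ⟩ := Lang.exists_of_proj_eq_append_singleton
    (f := fun w => {σ | w ∈ proj So '' LVG LG So V ∧ σ ∈ VA V ScA SoA Att w}) hs h
  ⟨u, hu, huw, hσ.2⟩

lemma mem_LVG_of_proj_eq (hV : ∀ w, Scᶜ ⊆ V w) (hnormV : Sc ⊆ So)
    {allow : List A → Set A} {s s₀ : List A} (hs : Lang LG allow s)
    (hs₀ : s₀ ∈ LVG LG So V) (h : proj So s = proj So s₀) : s ∈ LVG LG So V := by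
  induction hs generalizing s₀ with
  | nil => exact Lang.nil
  | @snoc u σ _ _ hG ih =>
    by_cases hσ : σ ∈ So
    · rw [proj_append, proj_singleton_of_mem hσ] at h
      obtain ⟨p, hp, hpu, hσV⟩ := exists_mem_LVG_of_proj_eq_append_singleton hs₀ h.symm
      exact Lang.snoc (ih hp hpu.symm) hσV hG
    · rw [proj_append, proj_singleton_of_not_mem hσ, List.append_nil] at h
      exact Lang.snoc (ih hs₀ h) (hV _ fun hσc => hσ (hnormV hσc)) hG

lemma mem_LVAG_of_phat_eq (hScA : ScA ⊆ So) (hnormA : ScA ⊆ SoA) {s s' : List A}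
    (hs' : s' ∈ LVG LG So V) (hs : s ∈ LVAG LG So V ScA SoA Att)
    (h : phat V SoA (proj So s) = phat V SoA (proj So s')) :
    s' ∈ LVAG LG So V ScA SoA Att := by
  induction hs' generalizing s with
  | nil => exact Lang.nil
  | @snoc u σ hu hσV hG ih =>
    have hobs : proj So u ∈ proj So '' LVG LG So V := ⟨u, hu, rfl⟩
    by_cases hσ : σ ∈ So
    · rw [proj_append, proj_singleton_of_mem hσ] at h
      obtain ⟨w, τ, hw⟩ : ∃ w τ, proj So s = w ++ [τ] := by
        rcases (proj So s).eq_nil_or_concat' with h₀ | hw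
        · simpa [h₀, length_phat] using congrArg List.length h
        · exact hw
      rw [hw, phat_append_singleton_inj] at h
      obtain ⟨hphat, hτσ, -⟩ := h
      obtain ⟨p, hp, hpw, hτ⟩ := exists_mem_LVAG_of_proj_eq_append_singleton hs hw
      refine Lang.snoc (ih hp (hpw ▸ hphat)) ⟨hobs, ?_⟩ hG
      by_cases hσA : σ ∈ ScA
      -- `σ` is seen by the attacker, so the attacked run also ended with `σ`, enabled by `Att`.
      · obtain rfl := eq_of_proj_singleton_eq (hnormA hσA) hτσ
        rcases hτ with hτ | hτ
        · exact absurd hσA hτ.2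
        · exact Or.inr (hphat ▸ hτ)
      · exact Or.inl ⟨hσV, hσA⟩
    · rw [proj_append, proj_singleton_of_not_mem hσ, List.append_nil] at h
      exact Lang.snoc (ih hs h) ⟨hobs, Or.inl ⟨hσV, fun hσA => hσ (hScA hσA)⟩⟩ hG

lemma mem_Ldmg_of_not_mem_V {Ldmg : Set (List A)} (hLdV : Ldmg ∩ LVG LG So V = ∅)
    (hsucc : Successful LG So V ScA SoA Att Ldmg) {s : List A} {σ : A}
    (hs : s ∈ LVG LG So V) (hσ : σ ∈ So) (hσV : σ ∉ V (proj So s))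
    (ht : s ++ [σ] ∈ LVAG LG So V ScA SoA Att) : s ++ [σ] ∈ Ldmg := by
  have hunobs : proj So (s ++ [σ]) ∉ proj So '' LVG LG So V := by
    rintro ⟨s₁, hs₁, h⟩
    rw [proj_append, proj_singleton_of_mem hσ] at h
    obtain ⟨-, -, -, hσV'⟩ := exists_mem_LVG_of_proj_eq_append_singleton hs₁ h
    exact hσV hσV'
  obtain ⟨d, hd, hds⟩ := hsucc.2 ⟨ht, hunobs⟩
  rcases List.prefix_concat_iff.mp hds with rfl | hds
  · exact hd
  · exact absurd (Set.mem_inter hd (Lang.of_prefix hs hds)) (hLdV ▸ Set.notMem_empty _)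

end ClosedLoop

theorem stmt_17_general {A : Type*} (So Sc : Set A) (LG : Set (List A))
    (V : List A → Set A) (hV : ∀ w, Scᶜ ⊆ V w)
    (hnormV : Sc ⊆ So)
    (ScA SoA : Set A) (hcA : ScA ⊆ Sc)
    (hnormA : ScA ⊆ SoA)
    (Ldmg : Set (List A))
    (hLdV : Ldmg ∩ LVG LG So V = ∅)
    (Att : List (List A × Set A) → Set A) (hAtt : ∀ x, Att x ⊆ ScA)
    (hsucc : Successful LG So V ScA SoA Att Ldmg) :
    ∀ t ∈ LVAG LG So V ScA SoA Att \ LVG LG So V,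
      ∃ s' σ, t = s' ++ [σ] ∧ s' ∈ LVG LG So V ∧ σ ∈ ScA ∧
        AttackPair LG So V ScA SoA Ldmg s' σ := by
  rintro t ⟨htA, htV⟩
  obtain rfl | ⟨s, σ, rfl⟩ := t.eq_nil_or_concat'
  · exact absurd Lang.nil htV
  obtain ⟨hsA, ⟨⟨s₀, hs₀, hss₀⟩, hσVA⟩, hG⟩ := Lang.of_append_singleton htA
  have hsV : s ∈ LVG LG So V := mem_LVG_of_proj_eq hV hnormV hsA hs₀ hss₀.symm
  have hσV : σ ∉ V (proj So s) := fun hσ => htV (Lang.snoc hsV hσ hG)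
  have hσAtt : σ ∈ Att (phat V SoA (proj So s)) := hσVA.resolve_left fun h => hσV h.1
  have hσA : σ ∈ ScA := hAtt _ hσAtt
  have hσ : σ ∈ So := hnormV (hcA hσA)
  refine ⟨s, σ, rfl, hsV, hσA, hsV, hσA,
    mem_Ldmg_of_not_mem_V hLdV hsucc hsV hσ hσV htA, fun s' hs' hphat hG' => ?_⟩
  have hs'A := mem_LVAG_of_phat_eq (hcA.trans hnormV) hnormA hs' hsA hphat
  have ht' : s' ++ [σ] ∈ LVAG LG So V ScA SoA Att :=
    Lang.snoc hs'A ⟨⟨s', hs', rfl⟩, Or.inr (hphat ▸ hσAtt)⟩ hG'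
  exact mem_Ldmg_of_not_mem_V hLdV hsucc hs' hσ (V_eq_of_phat_eq hphat ▸ hσV) ht'

/-- For a successful attacker `A`, every string of
`L(V_A/G) \ L(V/G)` has the form `s'σ` with `(s', σ)` an attack pair. -/
theorem stmt_17 {A : Type*} [Fintype A] (So Sc : Set A) (LG : Set (List A))
    (hnil : [] ∈ LG) (hpref : ∀ s t : List A, s <+: t → t ∈ LG → s ∈ LG)
    (V : List A → Set A) (hV : ∀ w, Scᶜ ⊆ V w)
    (hnormV : Sc ⊆ So)
    (ScA SoA : Set A) (hcA : ScA ⊆ Sc) (hoA : SoA ⊆ So)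
    (hnormA : ScA ⊆ SoA)
    (Ldmg : Set (List A)) (hLd : Ldmg ⊆ LG)
    (hLdV : Ldmg ∩ LVG LG So V = ∅)
    (Att : List (List A × Set A) → Set A) (hAtt : ∀ x, Att x ⊆ ScA)
    (hsucc : Successful LG So V ScA SoA Att Ldmg) :
    ∀ t ∈ LVAG LG So V ScA SoA Att \ LVG LG So V,
      ∃ s' σ, t = s' ++ [σ] ∧ s' ∈ LVG LG So V ∧ σ ∈ ScA ∧
        AttackPair LG So V ScA SoA Ldmg s' σ :=
  stmt_17_general So Sc LG V hV hnormV ScA SoA hcA hnormA Ldmg hLdV Att hAtt hsucc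

end ActuatorAttack
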